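/- Let A, B, B' be strings with ED(B', B) = 1, and suppose B' admits a partition into m contiguous intervals, each of length at most 1 or equal to a substring of A at a shift of at most k₀, with a monotone matching as in the decomposition lemma. Then B admits a partition into m+2 contiguous intervals, each of length at most 1 or equal to a substring of A at a shift of at most k₀+1, with a monotone matching. -/

import Mathlib

open Finset

/-- Cost structure for the Levenshtein distance (as in the former Mathlib
`Mathlib/Data/List/EditDistance/Defs.lean`), specialised to `ℕ`-valued costs. -/
structure Levenshtein.Cost (α β : Type*) where
  delete : α → ℕ
  insert : β → ℕ
  substitute : α → β → ℕ

/-- The default cost: unit cost for deletion, insertion and substitution of distinct letters. -/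
def Levenshtein.defaultCost {α : Type*} [DecidableEq α] : Levenshtein.Cost α α where
  delete _ := 1
  insert _ := 1
  substitute a b := if a = b then 0 else 1

/-- Levenshtein distance, by the recursion that characterised the former Mathlib definition. -/
def levenshtein {α β : Type*} (C : Levenshtein.Cost α β) : List α → List β → ℕ
  | [], [] => 0
  | [], y :: ys => C.insert y + levenshtein C [] ys
  | x :: xs, [] => C.delete x + levenshtein C xs []
  | x :: xs, y :: ys =>
    min (C.delete x + levenshtein C xs (y :: ys))
      (min (C.insert y + levenshtein C (x :: xs) ys) (C.substitute x y + levenshtein C xs ys))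

/-- Edit distance (Levenshtein distance with unit costs). -/
def ED {α : Type*} [DecidableEq α] (A B : List α) : ℕ :=
  levenshtein Levenshtein.defaultCost A B

/-- `HasDecomp A B m s` says that `B` can be partitioned into `m` contiguous intervals
(given by their lengths `L`; the `i`-th interval starts at the sum of the earlier
lengths) together with a monotone matching `f` assigning to matched intervals a
starting position in `A`, such that unmatched intervals have length at most `1` and
each matched interval of `B` equals a substring of `A` whose starting position is
shifted by at most `s`. -/
def HasDecomp {α : Type*} (A B : List α) (m s : ℕ) : Prop :=
  ∃ (L : Fin m → ℕ) (f : Fin m → Option ℕ),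
    (∑ i, L i) = B.length ∧
    (∀ i, f i = none → L i ≤ 1) ∧
    (∀ i iA, f i = some iA →
      iA + L i ≤ A.length ∧
      |(iA : ℤ) - (∑ t ∈ univ.filter (· < i), L t : ℤ)| ≤ s ∧
      (A.drop iA).take (L i) =
        (B.drop (∑ t ∈ univ.filter (· < i), L t)).take (L i)) ∧
    (∀ i i' iA iA', f i = some iA → f i' = some iA' → i < i' → iA + L i ≤ iA')

/-!
Write `B' = u ++ x ++ v` and `B = u ++ y ++ v` with `|x|, |y| ≤ 1`. The piece of the decomposition
of `B'` that contains `x` is cut into the part before `x`, the part `x`, and the part after `x`;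
replacing `x` by `y` gives three pieces of `B`, whose outer ones are matched inside the match of
the old piece and whose middle one `y` is unmatched of length at most one. Pieces before the edit
keep their positions, pieces after it move by `|y| - |x| ∈ {-1, 0, 1}`, so every shift grows by at
most one.
-/

section

variable {α : Type*}

section EditDistance

variable [DecidableEq α]

@[simp] theorem ED_nil_left (ys : List α) : ED [] ys = ys.length := by
  induction ys with
  | nil => simp [ED, levenshtein]
  | cons y ys ih => rw [ED, levenshtein, ← ED, ih, List.length_cons, add_comm]; rfl

@[simp] theorem ED_nil_right (xs : List α) : ED xs [] = xs.length := by
  induction xs with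
  | nil => simp [ED, levenshtein]
  | cons x xs ih => rw [ED, levenshtein, ← ED, ih, List.length_cons, add_comm]; rfl

theorem ED_cons_cons (x y : α) (xs ys : List α) :
    ED (x :: xs) (y :: ys) =
      min (ED xs (y :: ys) + 1)
        (min (ED (x :: xs) ys + 1) (ED xs ys + if x = y then 0 else 1)) := by
  simp only [ED, levenshtein, add_comm]; rfl

theorem eq_of_ED_eq_zero : ∀ {xs ys : List α}, ED xs ys = 0 → xs = ys
  | [], ys, h => by simpa [eq_comm] using h
  | x :: xs, [], h => by simp at h
  | x :: xs, y :: ys, h => by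
    rw [ED_cons_cons] at h
    by_cases hxy : x = y
    · rw [hxy, eq_of_ED_eq_zero (xs := xs) (ys := ys) (by simp at h; omega)]
    · simp [hxy] at h

theorem exists_eq_append_append_of_ED_le_one : ∀ {xs ys : List α}, ED xs ys ≤ 1 →
    ∃ u x y v : List α, x.length ≤ 1 ∧ y.length ≤ 1 ∧ xs = u ++ x ++ v ∧ ys = u ++ y ++ v
  | [], ys, h => ⟨[], [], ys, [], by simp, by simpa using h, by simp, by simp⟩
  | x :: xs, [], h => ⟨[], x :: xs, [], [], by simpa using h, by simp, by simp, by simp⟩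
  | x :: xs, y :: ys, h => by
    rw [ED_cons_cons, min_le_iff, min_le_iff] at h
    rcases h with h | h | h
    · obtain rfl := eq_of_ED_eq_zero (by omega : ED xs (y :: ys) = 0)
      exact ⟨[], [x], [], y :: ys, by simp, by simp, by simp, by simp⟩
    · obtain rfl := eq_of_ED_eq_zero (by omega : ED (x :: xs) ys = 0)
      exact ⟨[], [], [y], x :: xs, by simp, by simp, by simp, by simp⟩
    · by_cases hxy : x = y
      · obtain ⟨u, x', y', v, hx, hy, rfl, rfl⟩ :=
          exists_eq_append_append_of_ED_le_one (by simpa [hxy] using h)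
        exact ⟨x :: u, x', y', v, hx, hy, by simp, by simp [hxy]⟩
      · obtain rfl := eq_of_ED_eq_zero (by simp [hxy] at h; omega : ED xs ys = 0)
        exact ⟨[], [x], [y], xs, by simp, by simp, by simp, by simp⟩

end EditDistance

theorem List.take_drop_eq_of_take_eq {X Y : List α} {n d n' : ℕ} (h : X.take n = Y.take n)
    (hle : d + n' ≤ n) : (X.drop d).take n' = (Y.drop d).take n' := by
  have key : ∀ Z : List α, (Z.drop d).take n' = ((Z.take n).take (d + n')).drop d := fun Z => by
    rw [List.take_take, min_eq_left hle, List.take_drop]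
  rw [key, key, h]

theorem List.take_drop_append_eq_of_le {u w w' : List α} {q n : ℕ} (h : q + n ≤ u.length) :
    ((u ++ w).drop q).take n = ((u ++ w').drop q).take n := by
  rw [List.drop_append_of_le_length (by omega), List.drop_append_of_le_length (by omega),
    List.take_append_of_le_length (by simp; omega), List.take_append_of_le_length (by simp; omega)]

theorem List.drop_append_append_eq_drop {u x y v : List α} {q q' : ℕ}
    (hq : u.length + x.length ≤ q) (hq' : q' + x.length = q + y.length) :
    (u ++ y ++ v).drop q' = (u ++ x ++ v).drop q := by
  rw [List.drop_append, List.drop_eq_nil_of_le (as := u ++ y) (by simp; omega), List.drop_append,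
    List.drop_eq_nil_of_le (as := u ++ x) (by simp; omega)]
  simp only [List.nil_append, List.length_append]
  congr 1
  omega

def prefixSum (l : ℕ → ℕ) (k : ℕ) : ℕ := ∑ t ∈ range k, l t

@[simp] theorem prefixSum_zero (l : ℕ → ℕ) : prefixSum l 0 = 0 := rfl

theorem prefixSum_succ (l : ℕ → ℕ) (k : ℕ) : prefixSum l (k + 1) = prefixSum l k + l k :=
  sum_range_succ l k

theorem prefixSum_mono (l : ℕ → ℕ) : Monotone (prefixSum l) := fun _ _ h =>
  sum_le_sum_of_subset (range_subset_range.2 h)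

theorem sum_filter_lt_eq_prefixSum (l : ℕ → ℕ) {m : ℕ} (i : Fin m) :
    ∑ t ∈ univ.filter (· < i), l t = prefixSum l i := by
  rw [filter_gt_eq_Iio, prefixSum, ← Nat.Iio_eq_range, ← Fin.map_valEmbedding_Iio, sum_map]
  rfl

structure IsDecomp (A B : List α) (m s : ℕ) (l : ℕ → ℕ) (g : ℕ → Option ℕ) : Prop where
  prefixSum_eq : prefixSum l m = B.length
  le_one_of_eq_none : ∀ k < m, g k = none → l k ≤ 1
  add_le_length : ∀ k < m, ∀ i, g k = some i → i + l k ≤ A.length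
  abs_sub_le : ∀ k < m, ∀ i, g k = some i → |(i : ℤ) - prefixSum l k| ≤ s
  take_drop_eq : ∀ k < m, ∀ i, g k = some i →
    (A.drop i).take (l k) = (B.drop (prefixSum l k)).take (l k)
  add_le_of_lt : ∀ k k', k < k' → k' < m → ∀ i i', g k = some i → g k' = some i' → i + l k ≤ i'

theorem hasDecomp_iff {A B : List α} {m s : ℕ} :
    HasDecomp A B m s ↔ ∃ l g, IsDecomp A B m s l g := by
  constructor
  · rintro ⟨L, f, hsum, hnone, hsome, hmono⟩
    set l : ℕ → ℕ := fun k => if h : k < m then L ⟨k, h⟩ else 0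
    set g : ℕ → Option ℕ := fun k => if h : k < m then f ⟨k, h⟩ else none
    have hL : L = fun i : Fin m => l i := funext fun i => by simp [l, i.2]
    have hf : f = fun i : Fin m => g i := funext fun i => by simp [g, i.2]
    clear_value l g
    subst hL hf
    refine ⟨l, g, ⟨?_, fun k hk => hnone ⟨k, hk⟩, fun k hk i hi => (hsome ⟨k, hk⟩ i hi).1,
      fun k hk i hi => ?_, fun k hk i hi => ?_,
      fun k k' hkk' hk' i i' hi hi' => hmono ⟨k, hkk'.trans hk'⟩ ⟨k', hk'⟩ i i' hi hi' hkk'⟩⟩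
    · rw [← hsum]; exact (Fin.sum_univ_eq_sum_range l m).symm
    · simpa [← Nat.cast_sum, sum_filter_lt_eq_prefixSum] using (hsome ⟨k, hk⟩ i hi).2.1
    · simpa [sum_filter_lt_eq_prefixSum] using (hsome ⟨k, hk⟩ i hi).2.2
  · rintro ⟨l, g, h⟩
    refine ⟨fun i : Fin m => l i, fun i : Fin m => g i, ?_, fun i => h.le_one_of_eq_none i i.2,
      fun i iA hi => ?_, fun i i' iA iA' hi hi' hii' => h.add_le_of_lt i i' hii' i'.2 iA iA' hi hi'⟩
    · rw [Fin.sum_univ_eq_sum_range l m]; exact h.prefixSum_eq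
    · simp only [← Nat.cast_sum, sum_filter_lt_eq_prefixSum]
      exact ⟨h.add_le_length i i.2 iA hi, h.abs_sub_le i i.2 iA hi, h.take_drop_eq i i.2 iA hi⟩

/-- New matched piece `k` is the part at offset `δ k` of old piece `σ k`, displaced by at most `d`
in position. -/
theorem IsDecomp.of_subpieces {A B B' : List α} {m m' s d : ℕ} {l l' : ℕ → ℕ}
    {g g' : ℕ → Option ℕ} (h : IsDecomp A B m s l g) (σ δ : ℕ → ℕ)
    (hsum : prefixSum l' m' = B'.length)
    (hnone : ∀ k < m', g' k = none → l' k ≤ 1)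
    (hsome : ∀ k < m', ∀ i, g' k = some i → ∃ i₀, g (σ k) = some i₀ ∧ i = i₀ + δ k ∧
      σ k < m ∧ δ k + l' k ≤ l (σ k) ∧
      |(prefixSum l' k : ℤ) - (prefixSum l (σ k) + δ k : ℕ)| ≤ d ∧
      (B'.drop (prefixSum l' k)).take (l' k) = (B.drop (prefixSum l (σ k) + δ k)).take (l' k))
    (horder : ∀ k k', k < k' → k' < m' → ∀ i i', g' k = some i → g' k' = some i' →
      σ k < σ k' ∨ σ k = σ k' ∧ δ k + l' k ≤ δ k') :
    IsDecomp A B' m' (s + d) l' g' where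
  prefixSum_eq := hsum
  le_one_of_eq_none := hnone
  add_le_length k hk i hi := by
    obtain ⟨i₀, hi₀, rfl, hσ, hδ, -⟩ := hsome k hk i hi
    have := h.add_le_length _ hσ _ hi₀
    omega
  abs_sub_le k hk i hi := by
    obtain ⟨i₀, hi₀, rfl, hσ, -, hdisp, -⟩ := hsome k hk i hi
    have := h.abs_sub_le _ hσ _ hi₀
    rw [abs_le] at *
    push_cast at *
    constructor <;> linarith
  take_drop_eq k hk i hi := by
    obtain ⟨i₀, hi₀, rfl, hσ, hδ, -, hcontent⟩ := hsome k hk i hi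
    rw [hcontent, ← List.drop_drop, ← List.drop_drop]
    exact List.take_drop_eq_of_take_eq (h.take_drop_eq _ hσ _ hi₀) hδ
  add_le_of_lt k k' hkk' hk' i i' hi hi' := by
    obtain ⟨i₀, hi₀, rfl, hσ, hδ, -⟩ := hsome k (hkk'.trans hk') i hi
    obtain ⟨i₀', hi₀', rfl, hσ', -⟩ := hsome k' hk' i' hi'
    rcases horder k k' hkk' hk' _ _ hi hi' with hlt | ⟨heq, hle⟩
    · have := h.add_le_of_lt _ _ hlt hσ' _ _ hi₀ hi₀'
      omega
    · rw [heq, hi₀'] at hi₀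
      cases hi₀
      omega

/-! Splicing replaces piece `j` by three pieces of lengths `a`, `e`, `c`. The outer ones are the
parts of piece `j` before and after a part of length `b`, so the last one sits at offset `o = a + b`
inside piece `j`; the middle one is unmatched. -/

def spliceIdx (j k : ℕ) : ℕ := if k ≤ j then k else if k ≤ j + 2 then j else k - 2

def spliceOffset (j o k : ℕ) : ℕ := if k = j + 2 then o else 0

def spliceLen (l : ℕ → ℕ) (j a e c k : ℕ) : ℕ :=
  if k = j then a else if k = j + 1 then e else if k = j + 2 then c else l (spliceIdx j k)

def spliceMatch (g : ℕ → Option ℕ) (j o k : ℕ) : Option ℕ :=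
  if k = j + 1 then none else (g (spliceIdx j k)).map (· + spliceOffset j o k)

section Splice

variable {l : ℕ → ℕ} {j a b c e k : ℕ}

theorem spliceIdx_lt {m : ℕ} (hj : j < m) (hk : k < m + 2) : spliceIdx j k < m := by
  unfold spliceIdx
  split_ifs <;> omega

theorem spliceOffset_add_spliceLen_le (hl : l j = a + b + c) (hk : k ≠ j + 1) :
    spliceOffset j (a + b) k + spliceLen l j a e c k ≤ l (spliceIdx j k) := by
  unfold spliceLen spliceIdx spliceOffset
  split_ifs <;> subst_vars <;> omega

theorem spliceIdx_lt_or_eq {k' : ℕ} (hkk' : k < k') (hk : k ≠ j + 1) (hk' : k' ≠ j + 1) :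
    spliceIdx j k < spliceIdx j k' ∨ spliceIdx j k = spliceIdx j k' ∧
      spliceOffset j (a + b) k + spliceLen l j a e c k ≤ spliceOffset j (a + b) k' := by
  unfold spliceLen spliceIdx spliceOffset
  split_ifs <;> omega

theorem prefixSum_spliceLen_of_le (hk : k ≤ j) :
    prefixSum (spliceLen l j a e c) k = prefixSum l k :=
  sum_congr rfl fun t ht => by
    have : t < j := (mem_range.1 ht).trans_le hk
    unfold spliceLen spliceIdx
    split_ifs <;> first | rfl | omega

theorem prefixSum_add_spliceLen_le (hk : k ≤ j) :
    prefixSum l k + spliceLen l j a e c k ≤ prefixSum l j + a := by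
  have := prefixSum_mono (spliceLen l j a e c) (show k + 1 ≤ j + 1 by omega)
  rwa [prefixSum_succ, prefixSum_succ, prefixSum_spliceLen_of_le hk,
    prefixSum_spliceLen_of_le le_rfl, show spliceLen l j a e c j = a from if_pos rfl] at this

theorem prefixSum_spliceLen_add_of_le (hl : l j = a + b + c) (hk : j + 2 ≤ k) :
    prefixSum (spliceLen l j a e c) k + b =
      prefixSum l (spliceIdx j k) + spliceOffset j (a + b) k + e := by
  induction k, hk using Nat.le_induction with
  | base =>
    simp [prefixSum_succ, prefixSum_spliceLen_of_le, spliceLen, spliceIdx, spliceOffset]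
    omega
  | succ k hk ih =>
    have hσ : spliceIdx j (k + 1) = spliceIdx j k + 1 := by unfold spliceIdx; split_ifs <;> omega
    have hδ : spliceOffset j (a + b) (k + 1) = 0 := if_neg (by omega)
    have hlen : spliceOffset j (a + b) k + spliceLen l j a e c k = l (spliceIdx j k) := by
      unfold spliceLen spliceIdx spliceOffset
      split_ifs <;> subst_vars <;> omega
    rw [prefixSum_succ, hσ, prefixSum_succ, hδ]
    omega

theorem prefixSum_spliceLen_add_two {m : ℕ} (hl : l j = a + b + c) (hj : j < m) :
    prefixSum (spliceLen l j a e c) (m + 2) + b = prefixSum l m + e := by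
  have hσ : spliceIdx j (m + 2) = m := by unfold spliceIdx; split_ifs <;> omega
  have hδ : spliceOffset j (a + b) (m + 2) = 0 := if_neg (by omega)
  simpa [hσ, hδ] using prefixSum_spliceLen_add_of_le (e := e) hl (show j + 2 ≤ m + 2 by omega)

theorem prefixSum_add_le_prefixSum_spliceIdx (hl : l j = a + b + c) (hk : j + 2 ≤ k) :
    prefixSum l j + a + b ≤ prefixSum l (spliceIdx j k) + spliceOffset j (a + b) k := by
  rcases hk.eq_or_lt with rfl | hk
  · simp [spliceIdx, spliceOffset]; omega
  · have := prefixSum_mono l (show j + 1 ≤ spliceIdx j k by unfold spliceIdx; split_ifs <;> omega)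
    rw [prefixSum_succ] at this
    omega

end Splice

theorem IsDecomp.splice {A u x y v : List α} {m s j a c : ℕ} {l : ℕ → ℕ} {g : ℕ → Option ℕ}
    (h : IsDecomp A (u ++ x ++ v) m s l g) (hx : x.length ≤ 1) (hy : y.length ≤ 1) (hj : j < m)
    (ha : prefixSum l j + a = u.length) (hc : u.length + x.length + c = prefixSum l (j + 1)) :
    IsDecomp A (u ++ y ++ v) (m + 2) (s + 1) (spliceLen l j a y.length c)
      (spliceMatch g j (a + x.length)) := by
  have hl : l j = a + x.length + c := by have := prefixSum_succ l j; omega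
  have hne : ∀ {k i}, spliceMatch g j (a + x.length) k = some i → k ≠ j + 1 := by
    rintro k i hi rfl
    simp [spliceMatch] at hi
  refine h.of_subpieces (spliceIdx j) (spliceOffset j (a + x.length)) ?_ ?_ ?_ ?_
  · have hsum := prefixSum_spliceLen_add_two (e := y.length) hl hj
    rw [h.prefixSum_eq] at hsum
    simp only [List.length_append] at hsum ⊢
    omega
  · intro k hk hnone
    by_cases hmid : k = j + 1
    · simpa [spliceLen, hmid] using hy
    · simp only [spliceMatch, hmid, if_false, Option.map_eq_none_iff] at hnone
      have := h.le_one_of_eq_none _ (spliceIdx_lt hj hk) hnone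
      have := spliceOffset_add_spliceLen_le (e := y.length) hl hmid
      omega
  · intro k hk i hi
    have hmid := hne hi
    simp only [spliceMatch, hmid, if_false, Option.map_eq_some_iff] at hi
    obtain ⟨i₀, hi₀, rfl⟩ := hi
    refine ⟨i₀, hi₀, rfl, spliceIdx_lt hj hk, spliceOffset_add_spliceLen_le hl hmid, ?_⟩
    rcases le_or_gt k j with hkj | hkj
    · have hσ : spliceIdx j k = k := if_pos hkj
      have hlen : prefixSum l k + spliceLen l j a y.length c k ≤ u.length :=
        ha ▸ prefixSum_add_spliceLen_le hkj
      rw [hσ, show spliceOffset j (a + x.length) k = 0 from if_neg (by omega), add_zero,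
        prefixSum_spliceLen_of_le hkj]
      refine ⟨by simp, ?_⟩
      simp only [List.append_assoc]
      exact List.take_drop_append_eq_of_le hlen
    · have hpos := prefixSum_spliceLen_add_of_le (e := y.length) hl (show j + 2 ≤ k by omega)
      have hle := prefixSum_add_le_prefixSum_spliceIdx hl (show j + 2 ≤ k by omega)
      refine ⟨?_, ?_⟩
      · rw [abs_le]; push_cast; omega
      · exact congrArg _ (List.drop_append_append_eq_drop (by omega) (by omega))
  · intro k k' hkk' _ i i' hi hi'
    exact spliceIdx_lt_or_eq hkk' (hne hi) (hne hi')

theorem exists_prefixSum_le_and_add_le_prefixSum_succ (l : ℕ → ℕ) {m p e : ℕ} (hm : 0 < m)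
    (he : e ≤ 1) (hp : p + e ≤ prefixSum l m) :
    ∃ j < m, prefixSum l j ≤ p ∧ p + e ≤ prefixSum l (j + 1) := by
  induction m, hm using Nat.le_induction with
  | base => exact ⟨0, zero_lt_one, by simp, hp⟩
  | succ m hm ih =>
    by_cases h : p + e ≤ prefixSum l m
    · obtain ⟨j, hj, hj'⟩ := ih h
      exact ⟨j, by omega, hj'⟩
    · exact ⟨m, by omega, by omega, hp⟩

theorem isDecomp_of_length_le_one (A : List α) {B : List α} {m : ℕ} (s : ℕ) (hB : B.length ≤ 1)
    (hm : 0 < m) : IsDecomp A B m s (fun k => if k = 0 then B.length else 0) (fun _ => none) where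
  prefixSum_eq := by simp [prefixSum, hm]
  le_one_of_eq_none k _ _ := by split_ifs <;> omega
  add_le_length := by simp
  abs_sub_le := by simp
  take_drop_eq := by simp
  add_le_of_lt := by simp

end

/-- Inductive step of the structural decomposition lemma: a single edit operation
turning `B'` into `B` splits one interval into three and changes shifts by at most
one. -/
theorem decomp_inductive_step {α : Type*} [DecidableEq α] (A B B' : List α)
    (m k₀ : ℕ) (hedit : ED B' B = 1) (hdec : HasDecomp A B' m k₀) :
    HasDecomp A B (m + 2) (k₀ + 1) := by
  obtain ⟨u, x, y, v, hx, hy, rfl, rfl⟩ := exists_eq_append_append_of_ED_le_one hedit.le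
  obtain ⟨l, g, h⟩ := hasDecomp_iff.1 hdec
  have hlen := h.prefixSum_eq
  simp only [List.length_append] at hlen
  refine hasDecomp_iff.2 ?_
  rcases Nat.eq_zero_or_pos m with rfl | hm
  · exact ⟨_, _, isDecomp_of_length_le_one A _ (by simp at hlen ⊢; omega) (by omega)⟩
  · obtain ⟨j, hj, hstart, hend⟩ :=
      exists_prefixSum_le_and_add_le_prefixSum_succ l hm hx (p := u.length) (by omega)
    exact ⟨_, _, h.splice hx hy hj (Nat.add_sub_cancel' hstart) (Nat.add_sub_of_le hend)⟩
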